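/- arXiv:math/9810028 — 2 statements merged into one kernel-verified Lean document; each statement's English description precedes it below -/
import Mathlib

section
/- In a weak Hopf *-algebra B, the Haar projection is unique: if p and p' are self-adjoint idempotents in B satisfying x p = ε^t(x) p and x p' = ε^t(x) p' for all x ∈ B, together with ε^t(p) = 1 and ε^t(p') = 1, then p = p'. -/
open TensorProduct

noncomputable section

variable {B : Type*} [Ring B] [Algebra ℂ B]

/-- `x ⊗ y ↦ ε(x) • y` -/
def contractL (ε : B →ₗ[ℂ] ℂ) : B ⊗[ℂ] B →ₗ[ℂ] B :=
  TensorProduct.lift ((LinearMap.lsmul ℂ B).comp ε)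

/-- `x ⊗ y ↦ ε(y) • x` -/
def contractR (ε : B →ₗ[ℂ] ℂ) : B ⊗[ℂ] B →ₗ[ℂ] B :=
  TensorProduct.lift (((LinearMap.lsmul ℂ B).comp ε).flip)

/-- target counital map `ε^t(b) = ε(1₍₁₎ b) 1₍₂₎` -/
def epsT (Δ : B →ₗ[ℂ] B ⊗[ℂ] B) (ε : B →ₗ[ℂ] ℂ) : B →ₗ[ℂ] B :=
  (contractL ε) ∘ₗ (LinearMap.mulLeft ℂ (Δ 1)) ∘ₗ
    (Algebra.TensorProduct.includeLeft : B →ₐ[ℂ] B ⊗[ℂ] B).toLinearMap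

/-- source counital map `ε^s(b) = 1₍₁₎ ε(b 1₍₂₎)` -/
def epsS (Δ : B →ₗ[ℂ] B ⊗[ℂ] B) (ε : B →ₗ[ℂ] ℂ) : B →ₗ[ℂ] B :=
  (contractR ε) ∘ₗ (LinearMap.mulRight ℂ (Δ 1)) ∘ₗ
    (Algebra.TensorProduct.includeRight : B →ₐ[ℂ] B ⊗[ℂ] B).toLinearMap

/-- The weak bialgebra axioms. -/
structure IsWeakBialgebra (Δ : B →ₗ[ℂ] B ⊗[ℂ] B) (ε : B →ₗ[ℂ] ℂ) : Prop where
  coassoc : ∀ b : B, (TensorProduct.assoc ℂ B B B) ((LinearMap.rTensor B Δ) (Δ b)) =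
      (LinearMap.lTensor B Δ) (Δ b)
  map_mul : ∀ b c : B, Δ (b * c) = Δ b * Δ c
  counitL : ∀ b : B, contractL ε (Δ b) = b
  counitR : ∀ b : B, contractR ε (Δ b) = b
  weakT1 : ∀ b c : B, b * epsT Δ ε c = contractL ε (Δ b * (c ⊗ₜ[ℂ] 1))
  weakT2 : ∀ b : B, (LinearMap.lTensor B (epsT Δ ε)) (Δ b) = Δ 1 * (b ⊗ₜ[ℂ] 1)
  weakS1 : ∀ b c : B, epsS Δ ε c * b = contractR ε ((1 ⊗ₜ[ℂ] c) * Δ b)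
  weakS2 : ∀ b : B, (LinearMap.rTensor B (epsS Δ ε)) (Δ b) = (1 ⊗ₜ[ℂ] b) * Δ 1

/-- Uniqueness of the Haar projection in a weak Hopf \*-algebra. -/
theorem haar_projection_unique [StarRing B] [StarModule ℂ B] [FiniteDimensional ℂ B]
    (Δ : B →ₗ[ℂ] B ⊗[ℂ] B) (ε : B →ₗ[ℂ] ℂ) (h : IsWeakBialgebra Δ ε)
    (p p' : B)
    (hp_star : star p = p) (hp_idem : p * p = p)
    (hp'_star : star p' = p') (hp'_idem : p' * p' = p')
    (hp : ∀ x : B, x * p = epsT Δ ε x * p) (hp1 : epsT Δ ε p = 1)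
    (hp' : ∀ x : B, x * p' = epsT Δ ε x * p') (hp'1 : epsT Δ ε p' = 1) :
    p = p' := by
  have h1 : p' * p = p := by rw [hp p', hp'1, one_mul]
  have h2 : p * p' = p' := by rw [hp' p, hp1, one_mul]
  calc p = star p := hp_star.symm
    _ = star (p' * p) := by rw [h1]
    _ = star p * star p' := star_mul p' p
    _ = p * p' := by rw [hp_star, hp'_star]
    _ = p' := h2
end
end

section
/- Let (B, Δ, ε) be a coalgebra which is also a unital *-algebra, S: B → B a bijective anti-algebra and anti-coalgebra map, and set ε^t(b) = ε(1₁ b) 1₂ and H = S(1₁) 1₂. Assume: b₁ ⊗ ε^t(b₂) = 1₁ b ⊗ 1₂ for all b, b₁ S(b₂ H⁻¹) = ε^t(b) for all b (with H invertible), and Δ ∘ S = ς ∘ (S ⊗ S) ∘ Δ where ς is the flip. Then S(b₁) ε^t(b₂) = S(b) H for all b ∈ B. -/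
open TensorProduct

noncomputable section

variable {B : Type*} [Ring B] [Algebra ℂ B]

/-- `S(b₁) ε^t(b₂) = S(b) H` where `H = S(1₁)1₂` (Proposition 4.8). -/
theorem antipode_epsT_eq_mul_H [StarRing B] [StarModule ℂ B] [FiniteDimensional ℂ B]
    (Δ : B →ₗ[ℂ] B ⊗[ℂ] B) (ε : B →ₗ[ℂ] ℂ)
    (hcoassoc : ∀ b : B, (TensorProduct.assoc ℂ B B B) ((LinearMap.rTensor B Δ) (Δ b)) =
      (LinearMap.lTensor B Δ) (Δ b))
    (hcounitL : ∀ b : B, contractL ε (Δ b) = b)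
    (hcounitR : ∀ b : B, contractR ε (Δ b) = b)
    (S : B →ₗ[ℂ] B) (hSbij : Function.Bijective S)
    (hSm : ∀ x y : B, S (x * y) = S y * S x)
    (hSc : ∀ b : B, Δ (S b) = (TensorProduct.comm ℂ B B) ((TensorProduct.map S S) (Δ b)))
    (H Hinv : B)
    (hHdef : H = (LinearMap.mul' ℂ B) ((LinearMap.rTensor B S) (Δ 1)))
    (hH1 : H * Hinv = 1) (hH2 : Hinv * H = 1)
    (hweakT2 : ∀ b : B, (LinearMap.lTensor B (epsT Δ ε)) (Δ b) = Δ 1 * (b ⊗ₜ[ℂ] 1))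
    (hantipode : ∀ b : B,
      (LinearMap.mul' ℂ B) ((LinearMap.lTensor B S) (Δ b * ((1 : B) ⊗ₜ[ℂ] Hinv))) =
        epsT Δ ε b) :
    ∀ b : B, (LinearMap.mul' ℂ B) ((TensorProduct.map S (epsT Δ ε)) (Δ b)) = S b * H := by
  intro b
  have hmap : TensorProduct.map S (epsT Δ ε) =
      (LinearMap.rTensor B S).comp (LinearMap.lTensor B (epsT Δ ε)) := by
    ext x y
    simp [LinearMap.rTensor, LinearMap.lTensor]
  have key : ∀ t : B ⊗[ℂ] B,
      (LinearMap.mul' ℂ B) ((LinearMap.rTensor B S) (t * (b ⊗ₜ[ℂ] 1))) =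
        S b * (LinearMap.mul' ℂ B) ((LinearMap.rTensor B S) t) := by
    intro t
    induction t using TensorProduct.induction_on with
    | zero => simp
    | tmul x y =>
        simp [Algebra.TensorProduct.tmul_mul_tmul, hSm, mul_assoc]
    | add s t hs ht => simp [add_mul, hs, ht, mul_add]
  rw [hmap, LinearMap.comp_apply, hweakT2 b, key, ← hHdef]
end
end
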